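/- Let 1 ≤ p < ∞, let w̃ be a continuous positive weight and X = L^p_{w̃}(ℝ). Let F : D → ℝ be a warping function whose weight w = (F⁻¹)′ belongs to C^{n−1}(ℝ), satisfies w(x+y) ≤ C·w(x)·w(y) for all x,y ∈ ℝ, and |w^{(k)}/w| ≤ D_k for constants D_k > 0, k = 0,…,n−1. Suppose θ ∈ Cⁿ(ℝ) ∩ L²_{√w}(ℝ) satisfies θ^{(n)} ∈ X and θ^{(k)}·w^l ∈ X for all 0 ≤ k ≤ n−1 and 1 ≤ l ≤ n−k. Then (E_{y,ε}θ)^{(n)} ∈ X for all y ∈ ℝ and ε ≥ 0, and sup_{y∈ℝ} ‖(θ − E_{y,ε}θ)^{(n)}‖_X → 0 as ε → 0⁺. -/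

import Mathlib

/-!
Write `E_{y,ε}θ = θ e` with `e = exp (2πiε ψ_y)` and `ψ_y(t) = (F⁻¹(t+y) - F⁻¹(y)) / w(y)`.
Then `e' = a e` with `a = 2πiε w(· + y) / w(y)`, and `w(t+y) ≤ C w(t) w(y)` together with
`|w⁽ᵏ⁾| ≤ D_k w` bounds every derivative of `a` at `t` by `εB w(t)`, uniformly in `y`.
Differentiating `e⁽ʲ⁺¹⁾ = (a e)⁽ʲ⁾` by Leibniz' rule gives
`|e⁽ʲ⁾(t)| ≤ j! εB w(t) (1 + εB w(t))ʲ⁻¹` for `j ≥ 1`. Hence in the Leibniz expansion of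
`(θ - θ e)⁽ⁿ⁾` every term in which `e` is differentiated is `O(ε)` in `X`, because
`θ⁽ᵏ⁾ wˡ ∈ X`; the remaining term `θ⁽ⁿ⁾ (1 - e)` tends to `0` in `X` by dominated convergence,
since `|1 - e(t)| ≤ min 2 (2πεC |F⁻¹(t) - F⁻¹(0)|)` independently of `y`.
-/

open MeasureTheory Filter Topology Set
open scoped ENNReal NNReal

noncomputable section

/-- A warping function `F : D → ℝ` (with `D = ℝ` or `D = (0,∞)`), bundled together with its
inverse `Finv`, its derivative `F'` and the associated weight `w = (F⁻¹)'`.  The fields record: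
bijectivity of `F : D → ℝ`, `F ∈ C¹(D)` with `F' > 0`, strict decrease of `F'` in `|t|`,
`w = (F⁻¹)'`, oddness of `F` when `D = ℝ`, and `v`-moderateness of `w` for some
submultiplicative weight `v`. -/
structure Warping where
  D : Set ℝ
  F : ℝ → ℝ
  Finv : ℝ → ℝ
  F' : ℝ → ℝ
  w : ℝ → ℝ
  hD : D = Set.univ ∨ D = Set.Ioi 0
  left_inv : ∀ x ∈ D, Finv (F x) = x
  mem_inv : ∀ s : ℝ, Finv s ∈ D
  right_inv : ∀ s : ℝ, F (Finv s) = s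
  F_hasDeriv : ∀ t ∈ D, HasDerivAt F (F' t) t
  F'_cont : ContinuousOn F' D
  F'_pos : ∀ t ∈ D, 0 < F' t
  F'_dec : ∀ t₀ ∈ D, ∀ t₁ ∈ D, |t₀| < |t₁| → F' t₁ < F' t₀
  w_hasDeriv : ∀ s : ℝ, HasDerivAt Finv (w s) s
  w_pos : ∀ s : ℝ, 0 < w s
  odd_of_univ : D = Set.univ → ∀ t, F (-t) = -F t
  moderate : ∃ (v : ℝ → ℝ) (C₀ : ℝ), (∀ x, 0 < v x) ∧ (∀ x y, v (x + y) ≤ v x * v y) ∧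
      ∀ x y, w (x + y) ≤ C₀ * v x * w y

/-- The frequency-side warped atom `g_x = √(F'(x)) · (T_{F(x)}θ) ∘ F` on `D`, extended by zero. -/
def gxFun (W : Warping) (θ : ℝ → ℂ) (x : ℝ) : ℝ → ℂ :=
  W.D.indicator fun t => (Real.sqrt (W.F' x) : ℂ) * θ (W.F t - W.F x)

/-- The Fourier transform of the warped time-frequency atom `g_{x,ξ} = T_ξ (ǧ_x)`:
`ĝ_{x,ξ}(t) = e^{-2πiξt} g_x(t)`. -/
def hatAtom (W : Warping) (θ : ℝ → ℂ) (x ξ : ℝ) : ℝ → ℂ := fun t =>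
  gxFun W θ x t * Complex.exp (-(2 * Real.pi * Complex.I * ξ * t))

/-- The warped time-frequency transform `V_{θ,F} f (x,ξ) = ⟨f, g_{x,ξ}⟩`, expressed on the
Fourier side (via Plancherel) in terms of `fh = f̂`:
`V_{θ,F} f (x,ξ) = ∫ f̂(t) conj(g_x(t)) e^{2πiξt} dt`. -/
def warpedTransform (W : Warping) (θ fh : ℝ → ℂ) (x ξ : ℝ) : ℂ :=
  ∫ t : ℝ, fh t * (starRingEnd ℂ) (gxFun W θ x t) * Complex.exp (2 * Real.pi * Complex.I * ξ * t)

/-- The operator `E_{y,ε}`: `(E_{y,ε}f)(t) = f(t) e^{2πiε(F⁻¹(t+y)−F⁻¹(y))/w(y)}`. -/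
def Eop (W : Warping) (y ε : ℝ) (f : ℝ → ℂ) : ℝ → ℂ := fun t =>
  f t * Complex.exp (2 * Real.pi * Complex.I * ε *
    (((W.Finv (t + y) - W.Finv y) / W.w y : ℝ) : ℂ))

section Leibniz

variable {𝕜 : Type*} [NontriviallyNormedField 𝕜] {A : Type*} [NormedRing A] [NormedAlgebra 𝕜 A]

theorem norm_iteratedDeriv_mul_le {f g : 𝕜 → A} {n : ℕ} (hf : ContDiff 𝕜 n f)
    (hg : ContDiff 𝕜 n g) (x : 𝕜) :
    ‖iteratedDeriv n (fun y => f y * g y) x‖ ≤ ∑ i ∈ Finset.range (n + 1),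
      (n.choose i : ℝ) * ‖iteratedDeriv i f x‖ * ‖iteratedDeriv (n - i) g x‖ := by
  simpa only [norm_iteratedFDeriv_eq_norm_iteratedDeriv] using
    norm_iteratedFDeriv_mul_le hf hg x le_rfl

theorem sum_choose_mul_factorial_le (m : ℕ) :
    ∑ i ∈ Finset.range (m + 1), (m.choose i : ℝ) * (m - i).factorial ≤ (m + 1).factorial := by
  have hterm : ∀ i ∈ Finset.range (m + 1), (m.choose i : ℝ) * (m - i).factorial ≤ m.factorial := by
    intro i hi
    have := Nat.choose_mul_factorial_mul_factorial (Finset.mem_range_succ_iff.1 hi)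
    exact_mod_cast Nat.le_of_dvd m.factorial_pos ⟨i.factorial, by rw [← this]; ring⟩
  calc _ ≤ ∑ _i ∈ Finset.range (m + 1), (m.factorial : ℝ) := Finset.sum_le_sum hterm
    _ = (m + 1).factorial := by simp [Nat.factorial_succ]

variable {a e : 𝕜 → A} {t : 𝕜} {v : ℝ}

theorem norm_iteratedDeriv_succ_le_of_deriv_eq_mul (hde : deriv e = fun s => a s * e s)
    {m : ℕ} (ha : ContDiff 𝕜 m a) (he : ContDiff 𝕜 m e) :
    ‖iteratedDeriv (m + 1) e t‖ ≤ ∑ i ∈ Finset.range (m + 1),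
      (m.choose i : ℝ) * ‖iteratedDeriv i a t‖ * ‖iteratedDeriv (m - i) e t‖ := by
  rw [iteratedDeriv_succ', hde]
  exact norm_iteratedDeriv_mul_le ha he t

theorem norm_iteratedDeriv_succ_le_factorial_mul (hde : deriv e = fun s => a s * e s)
    {m : ℕ} (ha : ContDiff 𝕜 m a) (he : ContDiff 𝕜 m e)
    (hav : ∀ i ≤ m, ‖iteratedDeriv i a t‖ ≤ v)
    (hev : ∀ i ≤ m, ‖iteratedDeriv i e t‖ ≤ i.factorial * (1 + v) ^ i) :
    ‖iteratedDeriv (m + 1) e t‖ ≤ (m + 1).factorial * v * (1 + v) ^ m := by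
  have hv : 0 ≤ v := (norm_nonneg _).trans (hav 0 m.zero_le)
  have hterm : ∀ i ∈ Finset.range (m + 1),
      (m.choose i : ℝ) * ‖iteratedDeriv i a t‖ * ‖iteratedDeriv (m - i) e t‖
        ≤ (m.choose i * (m - i).factorial : ℝ) * (v * (1 + v) ^ m) := by
    intro i hi
    have hi : i ≤ m := Finset.mem_range_succ_iff.1 hi
    have hpow : (1 + v) ^ (m - i) ≤ (1 + v) ^ m := pow_le_pow_right₀ (by linarith) (by omega)
    calc (m.choose i : ℝ) * ‖iteratedDeriv i a t‖ * ‖iteratedDeriv (m - i) e t‖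
        ≤ m.choose i * v * ((m - i).factorial * (1 + v) ^ (m - i)) := by
          gcongr
          exacts [hav i hi, hev (m - i) (by omega)]
      _ ≤ m.choose i * v * ((m - i).factorial * (1 + v) ^ m) := by gcongr
      _ = _ := by ring
  calc ‖iteratedDeriv (m + 1) e t‖ ≤ _ := norm_iteratedDeriv_succ_le_of_deriv_eq_mul hde ha he
    _ ≤ _ := Finset.sum_le_sum hterm
    _ = (∑ i ∈ Finset.range (m + 1), (m.choose i : ℝ) * (m - i).factorial) * (v * (1 + v) ^ m) :=
        (Finset.sum_mul ..).symm
    _ ≤ (m + 1).factorial * (v * (1 + v) ^ m) := by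
        gcongr
        exact sum_choose_mul_factorial_le m
    _ = _ := by ring

variable {n : ℕ}

theorem norm_iteratedDeriv_le_factorial_mul_pow (hde : deriv e = fun s => a s * e s)
    (ha : ContDiff 𝕜 (n - 1 : ℕ) a) (he : ContDiff 𝕜 n e) (he1 : ‖e t‖ ≤ 1)
    (hav : ∀ i < n, ‖iteratedDeriv i a t‖ ≤ v) :
    ∀ j ≤ n, ‖iteratedDeriv j e t‖ ≤ j.factorial * (1 + v) ^ j := by
  intro j
  induction j using Nat.strong_induction_on with
  | _ j ih =>
    intro hj
    rcases j with _ | m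
    · simpa using he1
    have hv : 0 ≤ v := (norm_nonneg _).trans (hav 0 (by omega))
    calc ‖iteratedDeriv (m + 1) e t‖ ≤ (m + 1).factorial * v * (1 + v) ^ m :=
          norm_iteratedDeriv_succ_le_factorial_mul hde (ha.of_le (by exact_mod_cast (by omega)))
            (he.of_le (by exact_mod_cast (by omega))) (fun i hi => hav i (by omega))
            (fun i hi => ih i (by omega) (by omega))
      _ ≤ (m + 1).factorial * (1 + v) * (1 + v) ^ m := by gcongr; linarith
      _ = _ := by ring

theorem norm_iteratedDeriv_le_of_deriv_eq_mul (hde : deriv e = fun s => a s * e s)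
    (ha : ContDiff 𝕜 (n - 1 : ℕ) a) (he : ContDiff 𝕜 n e) (he1 : ‖e t‖ ≤ 1)
    (hav : ∀ i < n, ‖iteratedDeriv i a t‖ ≤ v) {j : ℕ} (hj : 1 ≤ j) (hjn : j ≤ n) :
    ‖iteratedDeriv j e t‖ ≤ j.factorial * v * (1 + v) ^ (j - 1) := by
  obtain ⟨m, rfl⟩ : ∃ m, j = m + 1 := ⟨j - 1, by omega⟩
  exact norm_iteratedDeriv_succ_le_factorial_mul hde (ha.of_le (by exact_mod_cast (by omega)))
    (he.of_le (by exact_mod_cast (by omega))) (fun i hi => hav i (by omega))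
    (fun i hi => norm_iteratedDeriv_le_factorial_mul_pow hde ha he he1 hav i (by omega))

end Leibniz

theorem abs_sub_le_abs_sub_of_hasDerivAt {f g f' g' : ℝ → ℝ}
    (hf : ∀ x, HasDerivAt f (f' x) x) (hg : ∀ x, HasDerivAt g (g' x) x)
    (hf' : ∀ x, 0 ≤ f' x) (hfg : ∀ x, f' x ≤ g' x) (a b : ℝ) :
    |f b - f a| ≤ |g b - g a| := by
  have hf_mono : Monotone f := monotone_of_deriv_nonneg (fun x => (hf x).differentiableAt)
    fun x => (hf x).deriv ▸ hf' x
  have hgf_mono : Monotone (g - f) :=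
    monotone_of_deriv_nonneg (fun x => ((hg x).sub (hf x)).differentiableAt)
      fun x => ((hg x).sub (hf x)).deriv ▸ sub_nonneg.2 (hfg x)
  wlog hab : a ≤ b generalizing a b
  · rw [abs_sub_comm, abs_sub_comm (g b)]
    exact this b a (le_of_not_ge hab)
  have h1 := hf_mono hab
  have h2 := hgf_mono hab
  simp only [Pi.sub_apply] at h2
  rw [abs_of_nonneg (by linarith), abs_of_nonneg (by linarith)]
  linarith

theorem norm_iteratedDeriv_const_sub {𝕜 F : Type*} [NontriviallyNormedField 𝕜]
    [NormedAddCommGroup F] [NormedSpace 𝕜 F] {j : ℕ} (hj : 1 ≤ j) (c : F) (f : 𝕜 → F) (t : 𝕜) :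
    ‖iteratedDeriv j (fun s => c - f s) t‖ = ‖iteratedDeriv j f t‖ := by
  rw [iteratedDeriv_const_sub hj, iteratedDeriv_neg, norm_neg]

theorem norm_iteratedDeriv_ofReal_comp {f : ℝ → ℝ} {N : ℕ} (hf : ContDiff ℝ N f) {i : ℕ}
    (hi : i ≤ N) (t : ℝ) : ‖iteratedDeriv i (fun s => (f s : ℂ)) t‖ = |iteratedDeriv i f t| := by
  rw [← norm_iteratedFDeriv_eq_norm_iteratedDeriv, ← Real.norm_eq_abs,
    ← norm_iteratedFDeriv_eq_norm_iteratedDeriv]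
  exact Complex.ofRealLI.norm_iteratedFDeriv_comp_left hf.contDiffAt (by exact_mod_cast hi)

theorem mul_one_add_mul_pow_le {c u : ℝ} (hc : 0 ≤ c) (hu : 0 ≤ u) {m n : ℕ} (hmn : m ≤ n) :
    c * u * (1 + c * u) ^ m ≤ c * (1 + c) ^ n * (u * (1 + u) ^ m) := by
  have hpow : (1 + c) ^ m ≤ (1 + c) ^ n := pow_le_pow_right₀ (by linarith) hmn
  calc c * u * (1 + c * u) ^ m ≤ c * u * ((1 + c) * (1 + u)) ^ m := by
        gcongr; nlinarith
    _ = c * (1 + c) ^ m * (u * (1 + u) ^ m) := by rw [mul_pow]; ring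
    _ ≤ c * (1 + c) ^ n * (u * (1 + u) ^ m) := by gcongr

theorem memLp_mul_one_add_pow_mul_norm {α E : Type*} [MeasurableSpace α] {μ : Measure α}
    [NormedAddCommGroup E] [NormedSpace ℝ E] {p : ℝ≥0∞} {u wt : α → ℝ} (hu : ∀ a, 0 ≤ u a)
    {f : α → E} (m : ℕ)
    (hf : ∀ l, 1 ≤ l → l ≤ m + 1 → MemLp (fun a => (wt a * u a ^ l) • f a) p μ) :
    MemLp (fun a => u a * (1 + u a) ^ m * ‖wt a • f a‖) p μ := by
  have hexpand : (fun a => u a * (1 + u a) ^ m * ‖wt a • f a‖) = fun a =>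
      ∑ l ∈ Finset.range (m + 1), (m.choose l : ℝ) * ‖(wt a * u a ^ (l + 1)) • f a‖ := by
    funext a
    simp only [norm_smul, norm_mul, norm_pow, Real.norm_of_nonneg (hu a), add_comm (1 : ℝ),
      add_pow, one_pow, mul_one, Finset.mul_sum, Finset.sum_mul]
    exact Finset.sum_congr rfl fun l _ => by ring
  rw [hexpand]
  exact memLp_finsetSum _ fun l hl =>
    ((hf (l + 1) (by omega) (by simpa [Nat.lt_succ_iff] using hl)).norm).const_mul _

def lowerDerivMajorant (u wt : ℝ → ℝ) (θ : ℝ → ℂ) (n : ℕ) (t : ℝ) : ℝ :=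
  ∑ k ∈ Finset.range n, n.choose k * (n - k).factorial * (u t * (1 + u t) ^ (n - k - 1)) *
    ‖wt t • iteratedDeriv k θ t‖

theorem memLp_lowerDerivMajorant {u wt : ℝ → ℝ} (hu : ∀ t, 0 ≤ u t) {θ : ℝ → ℂ} {n : ℕ}
    {p : ℝ≥0∞} (hθ : ∀ k ≤ n - 1, ∀ l : ℕ, 1 ≤ l → l ≤ n - k →
      MemLp (fun s : ℝ => (wt s * u s ^ l) • iteratedDeriv k θ s) p volume) :
    MemLp (lowerDerivMajorant u wt θ n) p volume := by
  refine memLp_finsetSum _ fun k hk => ?_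
  have hk : k < n := Finset.mem_range.1 hk
  convert (memLp_mul_one_add_pow_mul_norm hu (n - k - 1)
    fun l hl hln => hθ k (by omega) l hl (by omega)).const_mul
      ((n.choose k : ℝ) * (n - k).factorial) using 1
  funext t
  ring

theorem norm_smul_iteratedDeriv_mul_le {θ g : ℝ → ℂ} {n : ℕ} (hθ : ContDiff ℝ n θ)
    (hg : ContDiff ℝ n g) (wt : ℝ → ℝ) {u : ℝ → ℝ} {t c : ℝ} (hc : 0 ≤ c) (hu : 0 ≤ u t)
    (hgt : ∀ j, 1 ≤ j → j ≤ n →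
      ‖iteratedDeriv j g t‖ ≤ j.factorial * (c * u t) * (1 + c * u t) ^ (j - 1)) :
    ‖wt t • iteratedDeriv n (fun s => θ s * g s) t‖
      ≤ c * (1 + c) ^ n * lowerDerivMajorant u wt θ n t
        + ‖g t‖ * ‖wt t • iteratedDeriv n θ t‖ := by
  have hleib := norm_iteratedDeriv_mul_le hθ hg t
  rw [Finset.sum_range_succ, Nat.choose_self, Nat.sub_self, iteratedDeriv_zero] at hleib
  have hterm : ∀ k ∈ Finset.range n,
      (n.choose k : ℝ) * ‖iteratedDeriv k θ t‖ * ‖iteratedDeriv (n - k) g t‖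
        ≤ (n.choose k : ℝ) * ‖iteratedDeriv k θ t‖ *
          ((n - k).factorial * (c * (1 + c) ^ n * (u t * (1 + u t) ^ (n - k - 1)))) := by
    intro k hk
    have hk : k < n := Finset.mem_range.1 hk
    refine mul_le_mul_of_nonneg_left ((hgt (n - k) (by omega) (by omega)).trans ?_) (by positivity)
    rw [mul_assoc]
    exact mul_le_mul_of_nonneg_left (mul_one_add_mul_pow_le hc hu (by omega)) (by positivity)
  rw [norm_smul]
  calc ‖wt t‖ * ‖iteratedDeriv n (fun s => θ s * g s) t‖
      ≤ ‖wt t‖ * (∑ k ∈ Finset.range n, (n.choose k : ℝ) * ‖iteratedDeriv k θ t‖ *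
          ((n - k).factorial * (c * (1 + c) ^ n * (u t * (1 + u t) ^ (n - k - 1))))
        + ‖iteratedDeriv n θ t‖ * ‖g t‖) := by
        gcongr
        refine hleib.trans ?_
        simp only [Nat.cast_one, one_mul]
        exact add_le_add_left (Finset.sum_le_sum hterm) _
    _ = _ := by
        simp only [lowerDerivMajorant, norm_smul, mul_add, Finset.mul_sum]
        congr 1
        · exact Finset.sum_congr rfl fun k _ => by ring
        · ring

theorem tendsto_eLpNorm_smul_of_tendsto_zero {α E ι : Type*} [MeasurableSpace α]
    {μ : Measure α} [NormedAddCommGroup E] [NormedSpace ℝ E] {p : ℝ≥0∞} (hp : p ≠ ∞) {l : Filter ι}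
    [l.IsCountablyGenerated] {g : α → E} (hg : MemLp g p μ) {h : ι → α → ℝ}
    (hmeas : ∀ i, AEStronglyMeasurable (h i) μ) {M : ℝ} (hbd : ∀ᶠ i in l, ∀ a, ‖h i a‖ ≤ M)
    (hlim : ∀ a, Tendsto (fun i => h i a) l (𝓝 0)) :
    Tendsto (fun i => eLpNorm (fun a => h i a • g a) p μ) l (𝓝 0) := by
  rcases eq_or_ne p 0 with rfl | hp0
  · simpa using tendsto_const_nhds
  have hq : 0 < p.toReal := ENNReal.toReal_pos hp0 hp
  simp_rw [eLpNorm_eq_lintegral_rpow_enorm_toReal hp0 hp]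
  have hint : Tendsto (fun i => ∫⁻ a, ‖h i a • g a‖ₑ ^ p.toReal ∂μ) l (𝓝 (∫⁻ _a, 0 ∂μ)) := by
    refine tendsto_lintegral_filter_of_dominated_convergence'
      (fun a => (ENNReal.ofReal M * ‖g a‖ₑ) ^ p.toReal)
      (Eventually.of_forall fun i => (((hmeas i).smul hg.1).enorm).pow_const _)
      (hbd.mono fun i hi => Eventually.of_forall fun a => ?_) ?_
      (Eventually.of_forall fun a => ?_)
    · rw [enorm_smul, ← ofReal_norm (h i a)]
      gcongr
      exact hi a
    · simp_rw [ENNReal.mul_rpow_of_nonneg _ _ hq.le]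
      rw [lintegral_const_mul' _ _ (by simp [hq.le])]
      exact ENNReal.mul_ne_top (by simp [hq.le])
        (lintegral_rpow_enorm_lt_top_of_eLpNorm_lt_top hp0 hp hg.eLpNorm_lt_top).ne
    · have := ((hlim a).smul_const (g a)).enorm
      rw [zero_smul, enorm_zero] at this
      simpa [Function.comp_def, ENNReal.zero_rpow_of_pos hq] using
        ((ENNReal.continuous_rpow_const (y := p.toReal)).tendsto 0).comp this
  simpa [Function.comp_def, ENNReal.zero_rpow_of_pos (inv_pos.2 hq)] using
    ((ENNReal.continuous_rpow_const (y := p.toReal⁻¹)).tendsto _).comp hint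

theorem tendsto_iSup_eLpNorm_of_norm_le {α E ι κ : Type*} [MeasurableSpace α] {μ : Measure α}
    [NormedAddCommGroup E] {p : ℝ≥0∞} (hp : 1 ≤ p) (hp' : p ≠ ∞) {l : Filter ι}
    [l.IsCountablyGenerated] {f : ι → κ → α → E} {c : ι → ℝ} (hc : Tendsto c l (𝓝 0))
    {H G : α → ℝ} (hH : MemLp H p μ) (hG : MemLp G p μ) {h : ι → α → ℝ}
    (hmeas : ∀ i, AEStronglyMeasurable (h i) μ) {M : ℝ} (hbd : ∀ᶠ i in l, ∀ a, ‖h i a‖ ≤ M)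
    (hlim : ∀ a, Tendsto (fun i => h i a) l (𝓝 0))
    (hf : ∀ᶠ i in l, ∀ k a, ‖f i k a‖ ≤ c i * H a + h i a * G a) :
    Tendsto (fun i => ⨆ k, eLpNorm (f i k) p μ) l (𝓝 0) := by
  have hcH : Tendsto (fun i => ‖c i‖ₑ * eLpNorm H p μ) l (𝓝 0) := by
    simpa using ENNReal.Tendsto.mul_const (continuous_enorm.tendsto' 0 0 enorm_zero |>.comp hc)
      (Or.inr hH.eLpNorm_lt_top.ne)
  have hhG := tendsto_eLpNorm_smul_of_tendsto_zero hp' hG hmeas hbd hlim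
  refine tendsto_of_tendsto_of_tendsto_of_le_of_le' tendsto_const_nhds
    (by simpa using hcH.add hhG) (Eventually.of_forall fun i => zero_le) ?_
  filter_upwards [hf] with i hi
  refine iSup_le fun k => (eLpNorm_mono_real (hi k)).trans ?_
  calc eLpNorm (fun a => c i * H a + h i a * G a) p μ
      ≤ eLpNorm (c i • H) p μ + eLpNorm (fun a => h i a • G a) p μ :=
        eLpNorm_add_le (hH.const_mul (c i)).1 ((hmeas i).smul hG.1) hp
    _ = ‖c i‖ₑ * eLpNorm H p μ + eLpNorm (fun a => h i a • G a) p μ := by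
        rw [eLpNorm_const_smul]

namespace Warping

variable (W : Warping)

def modulation (y ε : ℝ) : ℝ → ℂ := fun t =>
  Complex.exp (2 * Real.pi * Complex.I * ε * (((W.Finv (t + y) - W.Finv y) / W.w y : ℝ) : ℂ))

theorem Eop_eq_mul_modulation (y ε : ℝ) (f : ℝ → ℂ) :
    Eop W y ε f = fun t => f t * W.modulation y ε t :=
  rfl

theorem sub_Eop_eq_mul (y ε : ℝ) (f : ℝ → ℂ) :
    (fun t => f t - Eop W y ε f t) = fun t => f t * (1 - W.modulation y ε t) := by
  funext t
  rw [Eop_eq_mul_modulation, mul_sub, mul_one]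

theorem norm_modulation (y ε t : ℝ) : ‖W.modulation y ε t‖ = 1 := by
  rw [modulation, Complex.norm_exp]
  simp [Complex.mul_re, Complex.mul_im]

theorem continuous_Finv : Continuous W.Finv :=
  continuous_iff_continuousAt.2 fun s => (W.w_hasDeriv s).continuousAt

theorem contDiff_Finv {n : ℕ} (hw : ContDiff ℝ (n - 1 : ℕ) W.w) : ContDiff ℝ n W.Finv := by
  rcases n with _ | n
  · exact contDiff_zero.2 W.continuous_Finv
  · have hderiv : deriv W.Finv = W.w := funext fun s => (W.w_hasDeriv s).deriv
    rw [Nat.cast_succ, contDiff_succ_iff_deriv, hderiv]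
    exact ⟨fun s => (W.w_hasDeriv s).differentiableAt, by simp, by simpa using hw⟩

theorem contDiff_modulation {n : ℕ} (hF : ContDiff ℝ n W.Finv) (y ε : ℝ) :
    ContDiff ℝ n (W.modulation y ε) := by
  refine (contDiff_const.mul (Complex.ofRealCLM.contDiff.comp ?_)).cexp
  exact ((hF.comp (contDiff_id.add contDiff_const)).sub contDiff_const).div_const _

theorem deriv_modulation (y ε : ℝ) :
    deriv (W.modulation y ε) = fun t =>
      (2 * Real.pi * Complex.I * ε / W.w y * (W.w (t + y) : ℂ)) * W.modulation y ε t := by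
  funext t
  have hphase : HasDerivAt (fun t => (W.Finv (t + y) - W.Finv y) / W.w y)
      (W.w (t + y) / W.w y) t :=
    (((W.w_hasDeriv (t + y)).comp_add_const t y).sub_const _).div_const _
  refine ((hphase.ofReal_comp.const_mul (2 * Real.pi * Complex.I * ε)).cexp.deriv).trans ?_
  simp only [modulation]
  push_cast
  ring

theorem const_pos_of_le_mul {C : ℝ} (hwsub : ∀ x y : ℝ, W.w (x + y) ≤ C * W.w x * W.w y) :
    0 < C := by
  have h := (W.w_pos (0 + 0)).trans_le (hwsub 0 0)
  exact pos_of_mul_pos_left (pos_of_mul_pos_left h (W.w_pos 0).le) (W.w_pos 0).le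

theorem abs_Finv_add_sub_le {C : ℝ} (hwsub : ∀ x y : ℝ, W.w (x + y) ≤ C * W.w x * W.w y)
    (y t : ℝ) : |W.Finv (t + y) - W.Finv y| ≤ C * W.w y * |W.Finv t - W.Finv 0| := by
  have hC : 0 ≤ C * W.w y := (mul_pos (W.const_pos_of_le_mul hwsub) (W.w_pos y)).le
  rw [← abs_of_nonneg hC, ← abs_mul, mul_sub]
  simpa using abs_sub_le_abs_sub_of_hasDerivAt
    (fun s => (W.w_hasDeriv (s + y)).comp_add_const s y)
    (fun s => (W.w_hasDeriv s).const_mul (C * W.w y)) (fun s => (W.w_pos _).le)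
    (fun s => by simpa [mul_comm, mul_assoc, mul_left_comm] using hwsub s y) 0 t

theorem norm_one_sub_modulation_le {C : ℝ} (hwsub : ∀ x y : ℝ, W.w (x + y) ≤ C * W.w x * W.w y)
    {ε : ℝ} (hε : 0 ≤ ε) (y t : ℝ) :
    ‖1 - W.modulation y ε t‖ ≤ min 2 (2 * Real.pi * ε * (C * |W.Finv t - W.Finv 0|)) := by
  set ψ := (W.Finv (t + y) - W.Finv y) / W.w y
  have hmod : W.modulation y ε t = Complex.exp (Complex.I * ((2 * Real.pi * ε * ψ : ℝ) : ℂ)) := by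
    simp only [modulation, ψ]; push_cast; ring_nf
  refine le_min ?_ ?_
  · calc ‖1 - W.modulation y ε t‖ ≤ ‖(1 : ℂ)‖ + ‖W.modulation y ε t‖ := norm_sub_le _ _
      _ = 2 := by rw [norm_modulation]; norm_num
  · have hψ : |ψ| ≤ C * |W.Finv t - W.Finv 0| := by
      rw [abs_div, abs_of_pos (W.w_pos y), div_le_iff₀ (W.w_pos y)]
      linarith [W.abs_Finv_add_sub_le hwsub y t]
    rw [norm_sub_rev, hmod]
    refine Real.norm_exp_I_mul_ofReal_sub_one_le.trans ?_
    rw [Real.norm_eq_abs, abs_mul, abs_of_nonneg (by positivity)]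
    gcongr

theorem exists_norm_iteratedDeriv_modulation_le {n : ℕ} (hw : ContDiff ℝ (n - 1 : ℕ) W.w)
    {C : ℝ} (hwsub : ∀ x y : ℝ, W.w (x + y) ≤ C * W.w x * W.w y) {D : ℕ → ℝ}
    (hder : ∀ k ≤ n - 1, ∀ s : ℝ, |iteratedDeriv k W.w s| ≤ D k * W.w s) :
    ∃ B, 0 ≤ B ∧ ∀ ε, 0 ≤ ε → ∀ y t j, 1 ≤ j → j ≤ n →
      ‖iteratedDeriv j (W.modulation y ε) t‖
        ≤ j.factorial * (ε * B * W.w t) * (1 + ε * B * W.w t) ^ (j - 1) := by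
  have hC := W.const_pos_of_le_mul hwsub
  have hD : ∀ k < n, 0 ≤ D k := fun k hk =>
    nonneg_of_mul_nonneg_left ((abs_nonneg _).trans (hder k (by omega) 0)) (W.w_pos 0)
  refine ⟨2 * Real.pi * C * ∑ k ∈ Finset.range n, D k,
    by have := Finset.sum_nonneg fun k hk => hD k (Finset.mem_range.1 hk); positivity,
    fun ε hε y t j hj hjn => ?_⟩
  have hwy : ContDiff ℝ (n - 1 : ℕ) fun s => W.w (s + y) := hw.comp (contDiff_id.add contDiff_const)
  refine norm_iteratedDeriv_le_of_deriv_eq_mul (W.deriv_modulation y ε)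
    (contDiff_const.mul (Complex.ofRealCLM.contDiff.comp hwy))
    (W.contDiff_modulation (W.contDiff_Finv hw) y ε) (W.norm_modulation y ε t).le
    (fun i hi => ?_) hj hjn
  have hc : ‖2 * Real.pi * Complex.I * ε / W.w y‖ = 2 * Real.pi * ε / W.w y := by
    simp [abs_of_nonneg hε, abs_of_pos (W.w_pos y), abs_of_pos Real.pi_pos]
  have hDi : D i ≤ ∑ k ∈ Finset.range n, D k :=
    Finset.single_le_sum (fun k hk => hD k (Finset.mem_range.1 hk)) (Finset.mem_range.2 hi)
  rw [iteratedDeriv_const_mul_field, norm_mul, hc,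
    norm_iteratedDeriv_ofReal_comp hwy (by omega), iteratedDeriv_comp_add_const]
  calc 2 * Real.pi * ε / W.w y * |iteratedDeriv i W.w (t + y)|
      ≤ 2 * Real.pi * ε / W.w y * (D i * (C * W.w t * W.w y)) := by
        refine mul_le_mul_of_nonneg_left ?_ (div_nonneg (by positivity) (W.w_pos y).le)
        exact (hder i (by omega) _).trans (mul_le_mul_of_nonneg_left (hwsub t y) (hD i hi))
    _ = ε * (2 * Real.pi * C * D i) * W.w t := by field_simp [(W.w_pos y).ne']
    _ ≤ _ := by gcongr; exact (W.w_pos t).le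

theorem exists_norm_smul_iteratedDeriv_Eop_le {n : ℕ} (hw : ContDiff ℝ (n - 1 : ℕ) W.w)
    {C : ℝ} (hwsub : ∀ x y : ℝ, W.w (x + y) ≤ C * W.w x * W.w y) {D : ℕ → ℝ}
    (hder : ∀ k ≤ n - 1, ∀ s : ℝ, |iteratedDeriv k W.w s| ≤ D k * W.w s)
    {θ : ℝ → ℂ} (hθ : ContDiff ℝ n θ) (wt : ℝ → ℝ) :
    ∃ B, 0 ≤ B ∧ ∀ ε, 0 ≤ ε → ∀ y t,
      ‖wt t • iteratedDeriv n (Eop W y ε θ) t‖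
          ≤ ε * B * (1 + ε * B) ^ n * lowerDerivMajorant W.w wt θ n t
            + ‖wt t • iteratedDeriv n θ t‖ ∧
        ‖wt t • iteratedDeriv n (fun u => θ u - Eop W y ε θ u) t‖
          ≤ ε * B * (1 + ε * B) ^ n * lowerDerivMajorant W.w wt θ n t
            + min 2 (2 * Real.pi * ε * (C * |W.Finv t - W.Finv 0|))
              * ‖wt t • iteratedDeriv n θ t‖ := by
  obtain ⟨B, hB, hmod⟩ := W.exists_norm_iteratedDeriv_modulation_le hw hwsub hder
  refine ⟨B, hB, fun ε hε y t => ⟨?_, ?_⟩⟩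
  · simpa only [W.Eop_eq_mul_modulation, W.norm_modulation, one_mul] using
      norm_smul_iteratedDeriv_mul_le hθ
        (W.contDiff_modulation (W.contDiff_Finv hw) y ε) wt (mul_nonneg hε hB) (W.w_pos t).le
        (hmod ε hε y t)
  · rw [W.sub_Eop_eq_mul]
    refine (norm_smul_iteratedDeriv_mul_le hθ
      (contDiff_const.sub (W.contDiff_modulation (W.contDiff_Finv hw) y ε)) wt (mul_nonneg hε hB)
      (W.w_pos t).le fun j hj hjn => ?_).trans ?_
    · rw [norm_iteratedDeriv_const_sub hj]
      exact hmod ε hε y t j hj hjn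
    · gcongr
      exact W.norm_one_sub_modulation_le hwsub hε y t

end Warping

theorem Eop_deriv_tendsto_zero_general
    (p : ℝ≥0∞) (hp : 1 ≤ p) (hp' : p ≠ ⊤)
    (wt : ℝ → ℝ) (hwt : Continuous wt)
    (W : Warping) (n : ℕ)
    (hw : ContDiff ℝ (n - 1 : ℕ) W.w)
    (C : ℝ) (hwsub : ∀ x y : ℝ, W.w (x + y) ≤ C * W.w x * W.w y)
    (Dk : ℕ → ℝ)
    (hder : ∀ k ≤ n - 1, ∀ s : ℝ, |iteratedDeriv k W.w s| ≤ Dk k * W.w s)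
    (θ : ℝ → ℂ) (hθ : ContDiff ℝ n θ)
    (hθn : MemLp (fun s : ℝ => wt s • iteratedDeriv n θ s) p volume)
    (hθkl : ∀ k ≤ n - 1, ∀ l : ℕ, 1 ≤ l → l ≤ n - k →
      MemLp (fun s : ℝ => (wt s * W.w s ^ l) • iteratedDeriv k θ s) p volume) :
    (∀ y ε : ℝ, 0 ≤ ε →
      MemLp (fun t : ℝ => wt t • iteratedDeriv n (Eop W y ε θ) t) p volume) ∧
    Tendsto (fun ε : ℝ =>
        ⨆ y : ℝ, eLpNorm
          (fun t : ℝ => wt t • iteratedDeriv n (fun u : ℝ => θ u - Eop W y ε θ u) t) p volume)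
      (nhdsWithin 0 (Set.Ioi 0)) (nhds 0) := by
  obtain ⟨B, hB, hbound⟩ := W.exists_norm_smul_iteratedDeriv_Eop_le hw hwsub hder hθ wt
  have hH := memLp_lowerDerivMajorant (fun t => (W.w_pos t).le) hθkl
  refine ⟨fun y ε hε => ?_, ?_⟩
  · have hE := hθ.mul (W.contDiff_modulation (W.contDiff_Finv hw) y ε)
    exact MemLp.of_le ((hH.const_mul (ε * B * (1 + ε * B) ^ n)).add hθn.norm)
      (hwt.smul (hE.continuous_iteratedDeriv n le_rfl)).aestronglyMeasurable
      (Eventually.of_forall fun t => (hbound ε hε y t).1.trans (Real.le_norm_self _))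
  have hC := W.const_pos_of_le_mul hwsub
  have hΦ : Continuous fun t => C * |W.Finv t - W.Finv 0| :=
    continuous_const.mul (W.continuous_Finv.sub continuous_const).abs
  refine tendsto_iSup_eLpNorm_of_norm_le hp hp' (c := fun ε => ε * B * (1 + ε * B) ^ n) ?_ hH
    hθn.norm (h := fun ε t => min 2 (2 * Real.pi * ε * (C * |W.Finv t - W.Finv 0|)))
    (fun ε => (continuous_const.min (continuous_const.mul hΦ)).aestronglyMeasurable) (M := 2)
    ?_ (fun t => ?_) ?_
  · simpa using ((by fun_prop : Continuous fun ε : ℝ => ε * B * (1 + ε * B) ^ n).tendsto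
      0).mono_left nhdsWithin_le_nhds
  · filter_upwards [self_mem_nhdsWithin] with ε (hε : 0 < ε) t
    rw [Real.norm_of_nonneg (le_min zero_le_two (by positivity))]
    exact min_le_left _ _
  · simpa using ((by fun_prop : Continuous fun ε : ℝ =>
      min 2 (2 * Real.pi * ε * (C * |W.Finv t - W.Finv 0|))).tendsto 0).mono_left nhdsWithin_le_nhds
  · filter_upwards [self_mem_nhdsWithin] with ε (hε : 0 < ε) y t
    exact (hbound ε hε.le y t).2

/-- Let `1 ≤ p < ∞`, `w̃` a continuous positive weight, `X = L^p_{w̃}(ℝ)`.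
Let `F : D → ℝ` be a warping function with `w = (F⁻¹)' ∈ C^{n−1}(ℝ)`, `w(x+y) ≤ C w(x) w(y)`
and `|w^{(k)}/w| ≤ D_k` for `k = 0,…,n−1`.  If `θ ∈ Cⁿ(ℝ) ∩ L²_{√w}(ℝ)` satisfies
`θ^{(n)} ∈ X` and `θ^{(k)} w^l ∈ X` for all `0 ≤ k ≤ n−1`, `1 ≤ l ≤ n−k`, then
`(E_{y,ε}θ)^{(n)} ∈ X` for all `y ∈ ℝ`, `ε ≥ 0`, and
`sup_{y∈ℝ} ‖(θ − E_{y,ε}θ)^{(n)}‖_X → 0` as `ε → 0⁺`. -/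
theorem Eop_deriv_tendsto_zero
    (p : ℝ≥0∞) (hp : 1 ≤ p) (hp' : p ≠ ⊤)
    (wt : ℝ → ℝ) (hwt : Continuous wt) (hwtpos : ∀ t, 0 < wt t)
    (W : Warping) (n : ℕ) (hn : 1 ≤ n)
    (hw : ContDiff ℝ (n - 1 : ℕ) W.w)
    (C : ℝ) (hwsub : ∀ x y : ℝ, W.w (x + y) ≤ C * W.w x * W.w y)
    (Dk : ℕ → ℝ) (hDkpos : ∀ k ≤ n - 1, 0 < Dk k)
    (hder : ∀ k ≤ n - 1, ∀ s : ℝ, |iteratedDeriv k W.w s| ≤ Dk k * W.w s)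
    (θ : ℝ → ℂ) (hθ : ContDiff ℝ n θ)
    (hθw : MemLp (fun s : ℝ => Real.sqrt (W.w s) • θ s) 2 volume)
    (hθn : MemLp (fun s : ℝ => wt s • iteratedDeriv n θ s) p volume)
    (hθkl : ∀ k ≤ n - 1, ∀ l : ℕ, 1 ≤ l → l ≤ n - k →
      MemLp (fun s : ℝ => (wt s * W.w s ^ l) • iteratedDeriv k θ s) p volume) :
    (∀ y ε : ℝ, 0 ≤ ε →
      MemLp (fun t : ℝ => wt t • iteratedDeriv n (Eop W y ε θ) t) p volume) ∧
    Tendsto (fun ε : ℝ =>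
        ⨆ y : ℝ, eLpNorm
          (fun t : ℝ => wt t • iteratedDeriv n (fun u : ℝ => θ u - Eop W y ε θ u) t) p volume)
      (nhdsWithin 0 (Set.Ioi 0)) (nhds 0) :=
  Eop_deriv_tendsto_zero_general p hp hp' wt hwt W n hw C hwsub Dk hder θ hθ hθn hθkl
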